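/- arXiv:2409.19197 — 4 statements merged into one kernel-verified Lean document; each statement's English description precedes it below -/
import Mathlib

section
/- Let Φ(t,s) be the evolution operator of a linear system x' = A(t)x on [0,∞) admitting a nonuniform exponential dichotomy with invariant projector P(·) and constants K ≥ 1, α > 0, 0 ≤ μ < α, and also admitting nonuniform bounded growth with constants K₀ ≥ 1, a > 0, ε ≥ 0. Then a + max{μ, ε} ≥ α. -/
open Real

lemma aux_decay (c δ x : ℝ) (hδ : 0 < δ)
    (h : ∀ t : ℝ, 0 ≤ t → x ≤ c * exp (-δ * t)) : x ≤ 0 := by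
  have hlim : Filter.Tendsto (fun t : ℝ => c * exp (-δ * t)) Filter.atTop (nhds 0) := by
    have h1 : Filter.Tendsto (fun t : ℝ => -δ * t) Filter.atTop Filter.atBot :=
      Filter.Tendsto.const_mul_atTop_of_neg (neg_neg_iff_pos.mpr hδ) Filter.tendsto_id
    have := (Real.tendsto_exp_atBot.comp h1).const_mul c
    simpa using this
  exact ge_of_tendsto hlim (Filter.eventually_atTop.2 ⟨0, fun t ht => h t ht⟩)

/-- If a linear system's evolution operator admits a nonuniform exponential dichotomy
with constants `(K, α, μ)` and nonuniform bounded growth with constants `(K₀, a, ε)`,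
then `a + max μ ε ≥ α`. -/
theorem stmt_0 {E : Type*} [NormedAddCommGroup E] [NormedSpace ℝ E] [Nontrivial E]
    (Φ : ℝ → ℝ → E →L[ℝ] E) (P : ℝ → E →L[ℝ] E)
    (K α μ K₀ a ε : ℝ)
    (hK : 1 ≤ K) (hα : 0 < α) (hμ : 0 ≤ μ) (hμα : μ < α)
    (hK₀ : 1 ≤ K₀) (ha : 0 < a) (hε : 0 ≤ ε)
    (hinv : ∀ t s : ℝ, 0 ≤ t → 0 ≤ s → (Φ t s).comp (Φ s t) = 1)
    (hcomm : ∀ t s : ℝ, 0 ≤ t → 0 ≤ s → (P t).comp (Φ t s) = (Φ t s).comp (P s))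
    (hP : ∀ t s : ℝ, 0 ≤ s → s ≤ t →
      ‖(Φ t s).comp (P s)‖ ≤ K * exp (-α * (t - s) + μ * s))
    (hQ : ∀ t s : ℝ, 0 ≤ t → t ≤ s →
      ‖(Φ t s).comp (1 - P s)‖ ≤ K * exp (α * (t - s) + μ * s))
    (hbg : ∀ t s : ℝ, 0 ≤ t → 0 ≤ s → ‖Φ t s‖ ≤ K₀ * exp (a * |t - s| + ε * s)) :
    α ≤ a + max μ ε := by
  by_contra hcon
  push_neg at hcon
  have hεα' : a + ε < α := lt_of_le_of_lt (by gcongr; exact le_max_right _ _) hcon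
  have hμα' : a + μ < α := lt_of_le_of_lt (by gcongr; exact le_max_left _ _) hcon
  -- P 0 = 0
  have hP0 : P 0 = 0 := by
    have hle : ∀ t : ℝ, 0 ≤ t → ‖P 0‖ ≤ (K₀ * K) * exp (-(α - a - ε) * t) := by
      intro t ht
      have key : P 0 = (Φ 0 t).comp ((Φ t 0).comp (P 0)) := by
        rw [← ContinuousLinearMap.comp_assoc, hinv 0 t le_rfl ht,
          ContinuousLinearMap.one_def, ContinuousLinearMap.id_comp]
      calc ‖P 0‖ = ‖(Φ 0 t).comp ((Φ t 0).comp (P 0))‖ := by rw [← key]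
        _ ≤ ‖Φ 0 t‖ * ‖(Φ t 0).comp (P 0)‖ := ContinuousLinearMap.opNorm_comp_le _ _
        _ ≤ (K₀ * exp (a * |(0:ℝ) - t| + ε * t)) * (K * exp (-α * (t - 0) + μ * 0)) := by
            apply mul_le_mul (hbg 0 t le_rfl ht) (hP t 0 le_rfl ht) (norm_nonneg _)
            positivity
        _ = (K₀ * K) * exp (-(α - a - ε) * t) := by
            simp only [zero_sub, abs_neg, abs_of_nonneg ht, sub_zero, mul_zero, add_zero]
            rw [mul_mul_mul_comm, ← exp_add]
            ring_nf
    have := aux_decay (K₀ * K) (α - a - ε) ‖P 0‖ (by linarith) hle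
    exact norm_le_zero_iff.mp this
  -- 1 - P 0 = 0
  have hQ0 : (1 : E →L[ℝ] E) - P 0 = 0 := by
    have hle : ∀ s : ℝ, 0 ≤ s → ‖(1 : E →L[ℝ] E) - P 0‖ ≤ (K * K₀) * exp (-(α - a - μ) * s) := by
      intro s hs
      have key : (1 : E →L[ℝ] E) - P 0 = ((Φ 0 s).comp (1 - P s)).comp (Φ s 0) := by
        rw [ContinuousLinearMap.comp_sub, ContinuousLinearMap.sub_comp,
          ← hcomm 0 s le_rfl hs]
        simp [ContinuousLinearMap.comp_assoc, hinv 0 s le_rfl hs, ContinuousLinearMap.one_def]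
      calc ‖(1 : E →L[ℝ] E) - P 0‖ = ‖((Φ 0 s).comp (1 - P s)).comp (Φ s 0)‖ := by rw [← key]
        _ ≤ ‖(Φ 0 s).comp (1 - P s)‖ * ‖Φ s 0‖ := ContinuousLinearMap.opNorm_comp_le _ _
        _ ≤ (K * exp (α * ((0:ℝ) - s) + μ * s)) * (K₀ * exp (a * |s - 0| + ε * 0)) := by
            apply mul_le_mul (hQ 0 s le_rfl hs) (hbg s 0 hs le_rfl) (norm_nonneg _)
            positivity
        _ = (K * K₀) * exp (-(α - a - μ) * s) := by
            simp only [sub_zero, abs_of_nonneg hs, mul_zero, add_zero]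
            rw [mul_mul_mul_comm, ← exp_add]
            ring_nf
    have := aux_decay (K * K₀) (α - a - μ) _ (by linarith) hle
    exact norm_le_zero_iff.mp this
  have : (1 : E →L[ℝ] E) = 0 := by
    have := hQ0
    rw [hP0] at this
    simpa using this
  have h1 : ‖(1 : E →L[ℝ] E)‖ = 1 := ContinuousLinearMap.norm_id
  rw [this] at h1
  simp at h1
end

section
/- Under the hypotheses of a nonuniform exponential dichotomy, if α > μ + a and α > ε + a, then for all t ≥ s ≥ 0, ‖I‖ ≤ K K₀ (e^{(-α+ε+a)t} e^{(μ+α-a)s} + e^{(-α+μ+a)t} e^{(α-a+ε)s}). In particular, fixing s and letting t → ∞ yields ‖I‖ ≤ 0, a contradiction. -/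
open Real

/-- Under the hypotheses of a nonuniform exponential dichotomy and nonuniform bounded
growth, if `α > μ + a` and `α > ε + a`, then for all `t ≥ s ≥ 0`,
`‖I‖ ≤ K K₀ (e^{(-α+ε+a)t} e^{(μ+α-a)s} + e^{(-α+μ+a)t} e^{(α-a+ε)s})`;
letting `t → ∞` yields `‖I‖ ≤ 0`, a contradiction. -/
theorem stmt_1 {E : Type*} [NormedAddCommGroup E] [NormedSpace ℝ E] [Nontrivial E]
    (Φ : ℝ → ℝ → E →L[ℝ] E) (P : ℝ → E →L[ℝ] E)
    (K α μ K₀ a ε : ℝ)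
    (hK : 1 ≤ K) (hα : 0 < α) (hμ : 0 ≤ μ) (hμα : μ < α)
    (hK₀ : 1 ≤ K₀) (ha : 0 < a) (hε : 0 ≤ ε)
    (h1 : μ + a < α) (h2 : ε + a < α)
    (hinv : ∀ t s : ℝ, 0 ≤ t → 0 ≤ s → (Φ t s).comp (Φ s t) = 1)
    (hcomm : ∀ t s : ℝ, 0 ≤ t → 0 ≤ s → (P t).comp (Φ t s) = (Φ t s).comp (P s))
    (hP : ∀ t s : ℝ, 0 ≤ s → s ≤ t →
      ‖(Φ t s).comp (P s)‖ ≤ K * exp (-α * (t - s) + μ * s))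
    (hQ : ∀ t s : ℝ, 0 ≤ t → t ≤ s →
      ‖(Φ t s).comp (1 - P s)‖ ≤ K * exp (α * (t - s) + μ * s))
    (hbg : ∀ t s : ℝ, 0 ≤ t → 0 ≤ s → ‖Φ t s‖ ≤ K₀ * exp (a * |t - s| + ε * s)) :
    (∀ t s : ℝ, 0 ≤ s → s ≤ t →
      ‖(1 : E →L[ℝ] E)‖ ≤ K * K₀ * (exp ((-α + ε + a) * t) * exp ((μ + α - a) * s)
        + exp ((-α + μ + a) * t) * exp ((α - a + ε) * s))) ∧ False := by
  have main : ∀ t s : ℝ, 0 ≤ s → s ≤ t →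
      ‖(1 : E →L[ℝ] E)‖ ≤ K * K₀ * (exp ((-α + ε + a) * t) * exp ((μ + α - a) * s)
        + exp ((-α + μ + a) * t) * exp ((α - a + ε) * s)) := by
    intro t s hs hst
    have ht : (0:ℝ) ≤ t := hs.trans hst
    have hi : Φ t s * Φ s t = 1 := hinv t s ht hs
    have hc : P s * Φ s t = Φ s t * P t := hcomm s t hs ht
    have key : (1 : E →L[ℝ] E)
        = (Φ t s * P s) * Φ s t + Φ t s * (Φ s t * (1 - P t)) := by
      have : (Φ t s * P s) * Φ s t + Φ t s * (Φ s t * (1 - P t))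
          = Φ t s * (P s * Φ s t) + Φ t s * Φ s t - Φ t s * (Φ s t * P t) := by
        noncomm_ring
      rw [this, ← hc, hi]
      noncomm_ring
    have hbg1 : ‖Φ s t‖ ≤ K₀ * exp (a * (t - s) + ε * t) := by
      have h := hbg s t hs ht
      rwa [abs_of_nonpos (by linarith), neg_sub] at h
    have hbg2 : ‖Φ t s‖ ≤ K₀ * exp (a * (t - s) + ε * s) := by
      have h := hbg t s ht hs
      rwa [abs_of_nonneg (by linarith)] at h
    have hP1 : ‖Φ t s * P s‖ ≤ K * exp (-α * (t - s) + μ * s) := hP t s hs hst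
    have hQ1 : ‖Φ s t * (1 - P t)‖ ≤ K * exp (α * (s - t) + μ * t) := hQ s t hs hst
    calc ‖(1 : E →L[ℝ] E)‖
        = ‖(Φ t s * P s) * Φ s t + Φ t s * (Φ s t * (1 - P t))‖ := by rw [← key]
      _ ≤ ‖(Φ t s * P s) * Φ s t‖ + ‖Φ t s * (Φ s t * (1 - P t))‖ := norm_add_le _ _
      _ ≤ ‖Φ t s * P s‖ * ‖Φ s t‖ + ‖Φ t s‖ * ‖Φ s t * (1 - P t)‖ :=
          add_le_add (norm_mul_le _ _) (norm_mul_le _ _)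
      _ ≤ (K * exp (-α * (t - s) + μ * s)) * (K₀ * exp (a * (t - s) + ε * t))
          + (K₀ * exp (a * (t - s) + ε * s)) * (K * exp (α * (s - t) + μ * t)) := by
          gcongr <;> first | exact norm_nonneg _ | positivity
      _ = K * K₀ * (exp ((-α + ε + a) * t + (μ + α - a) * s)
          + exp ((-α + μ + a) * t + (α - a + ε) * s)) := by
          rw [show (-α + ε + a) * t + (μ + α - a) * s
              = (-α * (t - s) + μ * s) + (a * (t - s) + ε * t) by ring,
            show (-α + μ + a) * t + (α - a + ε) * s
              = (a * (t - s) + ε * s) + (α * (s - t) + μ * t) by ring,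
            exp_add (-α * (t - s) + μ * s) (a * (t - s) + ε * t),
            exp_add (a * (t - s) + ε * s) (α * (s - t) + μ * t)]
          ring
      _ = K * K₀ * (exp ((-α + ε + a) * t) * exp ((μ + α - a) * s)
          + exp ((-α + μ + a) * t) * exp ((α - a + ε) * s)) := by
          rw [exp_add ((-α + ε + a) * t) ((μ + α - a) * s),
            exp_add ((-α + μ + a) * t) ((α - a + ε) * s)]
  refine ⟨main, ?_⟩
  have hc1 : -α + ε + a < 0 := by linarith
  have hc2 : -α + μ + a < 0 := by linarith
  have hlim : Filter.Tendsto
      (fun t : ℝ => K * K₀ * (exp ((-α + ε + a) * t) * exp ((μ + α - a) * 0)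
        + exp ((-α + μ + a) * t) * exp ((α - a + ε) * 0)))
      Filter.atTop (nhds 0) := by
    have e1 : Filter.Tendsto (fun t : ℝ => exp ((-α + ε + a) * t)) Filter.atTop (nhds 0) :=
      Real.tendsto_exp_comp_nhds_zero.2 ((Filter.tendsto_const_mul_atBot_of_neg hc1).2 Filter.tendsto_id)
    have e2 : Filter.Tendsto (fun t : ℝ => exp ((-α + μ + a) * t)) Filter.atTop (nhds 0) :=
      Real.tendsto_exp_comp_nhds_zero.2 ((Filter.tendsto_const_mul_atBot_of_neg hc2).2 Filter.tendsto_id)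
    have := ((e1.mul_const (exp ((μ + α - a) * 0))).add
      (e2.mul_const (exp ((α - a + ε) * 0)))).const_mul (K * K₀)
    simpa using this
  have hle : ‖(1 : E →L[ℝ] E)‖ ≤ 0 :=
    ge_of_tendsto hlim (Filter.eventually_atTop.2 ⟨0, fun t ht => main t 0 le_rfl ht⟩)
  have : ‖(1 : E →L[ℝ] E)‖ = 1 := ContinuousLinearMap.norm_id
  linarith
end

section
/- Suppose ω : [0,∞) → ℝⁿ is continuous with |ω|_𝒜 := sup_{t≥0} e^{-bt}|ω(t)| < ∞ and satisfies, for all t ≥ 0, |ω(t)| ≤ KL ∫_0^t e^{-α(t-s)+μs} e^{-θs} |ω(s)| ds + KL ∫_t^∞ e^{α(t-s)+μs} e^{-θs} |ω(s)| ds, where K ≥ 1, L > 0, α > 0, μ ≥ 0, θ ≥ μ, b > 0, α + μ - θ + b > 0, α - μ + θ - b > 0, and KL/(α+μ-θ+b) + KL/(α-μ+θ-b) < 1. Then ω(t) = 0 for all t ≥ 0. -/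
/-!
Let `M` be the weighted norm `sup_{t ≥ 0} e^{-bt} ‖ω t‖`, so that `‖ω s‖ ≤ M e^{bs}`. Inserting
this into both integrals leaves integrals of pure exponentials, which evaluate to
`‖ω t‖ ≤ q M e^{-(θ - μ)t} e^{bt} ≤ q M e^{bt}` with `q = KL/(α+μ-θ+b) + KL/(α-μ+θ-b)`.
Taking the supremum gives `M ≤ q M`, and `q < 1` forces `M = 0`.
-/

open Real MeasureTheory intervalIntegral Set

theorem setIntegral_le_setIntegral_of_subset {F G : ℝ → ℝ} {s u : Set ℝ}
    (hs : MeasurableSet s) (hsu : s ⊆ u) (hG : IntegrableOn G u)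
    (hF0 : ∀ x, 0 ≤ F x) (hG0 : ∀ x, 0 ≤ G x)
    (hFG : ∀ x ∈ s, F x ≤ G x) : ∫ x in s, F x ≤ ∫ x in u, G x :=
  calc ∫ x in s, F x ≤ ∫ x in s, G x :=
        integral_mono_of_nonneg (ae_of_all _ hF0) (hG.mono_set hsu)
          (ae_restrict_of_forall_mem hs hFG)
    _ ≤ ∫ x in u, G x := setIntegral_mono_set hG (ae_of_all _ hG0) hsu.eventuallyLE

theorem exp_neg_mul_mul_le_iff {b t x y : ℝ} :
    exp (-b * t) * x ≤ y ↔ x ≤ y * exp (b * t) := by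
  rw [← div_le_iff₀ (exp_pos _), div_eq_mul_inv, ← exp_neg, mul_comm, ← neg_mul]

theorem norm_le_iSup_mul_exp {E : Type*} [NormedAddCommGroup E] {ω : ℝ → E} {b : ℝ}
    (hbdd : BddAbove (range fun t : {t : ℝ // 0 ≤ t} => exp (-b * t.1) * ‖ω t.1‖))
    {s : ℝ} (hs : 0 ≤ s) :
    ‖ω s‖ ≤ (⨆ t : {t : ℝ // 0 ≤ t}, exp (-b * t.1) * ‖ω t.1‖) * exp (b * s) :=
  exp_neg_mul_mul_le_iff.1 (le_ciSup hbdd ⟨s, hs⟩)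

section Kernel

variable {a μ θ b M t : ℝ} {f : ℝ → ℝ}

theorem kernel_mul_exp_eq (s : ℝ) :
    exp (a * (t - s) + μ * s) * exp (-θ * s) * (M * exp (b * s))
      = M * exp (a * t) * exp ((μ - θ + b - a) * s) := by
  rw [mul_assoc M, ← exp_add, mul_comm _ (M * _), mul_assoc M, ← exp_add, ← exp_add]
  ring_nf

variable (hf0 : ∀ s, 0 ≤ f s) (hf : ∀ s, 0 ≤ s → f s ≤ M * exp (b * s))
include hf0 hf

theorem integral_kernel_mul_le (hc : 0 < -a + μ - θ + b) (ht : 0 ≤ t) :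
    ∫ s in (0:ℝ)..t, exp (a * (t - s) + μ * s) * exp (-θ * s) * f s
      ≤ M * exp ((μ - θ + b) * t) / (-a + μ - θ + b) := by
  have hM : 0 ≤ M := by simpa using (hf0 0).trans (hf 0 le_rfl)
  have hk : 0 < μ - θ + b - a := by linarith
  rw [integral_of_le ht]
  calc _ ≤ ∫ s in Iic t, M * exp (a * t) * exp ((μ - θ + b - a) * s) :=
        setIntegral_le_setIntegral_of_subset measurableSet_Ioc Ioc_subset_Iic_self
          ((integrableOn_exp_mul_Iic hk t).const_mul _) (fun s => by have := hf0 s; positivity)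
          (fun s => by positivity) fun s hs => by
            rw [← kernel_mul_exp_eq]
            exact mul_le_mul_of_nonneg_left (hf s hs.1.le) (by positivity)
    _ = M * exp ((μ - θ + b) * t) / (-a + μ - θ + b) := by
        rw [MeasureTheory.integral_const_mul, integral_exp_mul_Iic hk, mul_div_assoc', mul_assoc,
          ← exp_add]
        ring_nf

theorem setIntegral_Ioi_kernel_mul_le (hc : 0 < a - μ + θ - b) (ht : 0 ≤ t) :
    ∫ s in Ioi t, exp (a * (t - s) + μ * s) * exp (-θ * s) * f s
      ≤ M * exp ((μ - θ + b) * t) / (a - μ + θ - b) := by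
  have hM : 0 ≤ M := by simpa using (hf0 0).trans (hf 0 le_rfl)
  have hk : μ - θ + b - a < 0 := by linarith
  calc _ ≤ ∫ s in Ioi t, M * exp (a * t) * exp ((μ - θ + b - a) * s) :=
        setIntegral_le_setIntegral_of_subset measurableSet_Ioi subset_rfl
          ((integrableOn_exp_mul_Ioi hk t).const_mul _) (fun s => by have := hf0 s; positivity)
          (fun s => by positivity) fun s hs => by
            rw [← kernel_mul_exp_eq]
            exact mul_le_mul_of_nonneg_left (hf s (ht.trans hs.le)) (by positivity)
    _ = M * exp ((μ - θ + b) * t) / (a - μ + θ - b) := by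
        rw [MeasureTheory.integral_const_mul, integral_exp_mul_Ioi hk, mul_div_assoc', mul_assoc,
          mul_neg, ← exp_add, mul_neg, neg_div, ← div_neg]
        ring_nf

end Kernel

theorem stmt_9_general {E : Type*} [NormedAddCommGroup E]
    (K L α μ θ b : ℝ)
    (hK : 1 ≤ K) (hL : 0 < L) (hθμ : μ ≤ θ)
    (h1 : 0 < α + μ - θ + b) (h2 : 0 < α - μ + θ - b)
    (hq : K * L / (α + μ - θ + b) + K * L / (α - μ + θ - b) < 1)
    (ω : ℝ → E)
    (hbdd : BddAbove (Set.range fun t : {t : ℝ // 0 ≤ t} => exp (-b * t.1) * ‖ω t.1‖))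
    (hineq : ∀ t : ℝ, 0 ≤ t →
      ‖ω t‖ ≤ K * L * (∫ s in (0:ℝ)..t, exp (-α * (t - s) + μ * s) * exp (-θ * s) * ‖ω s‖)
        + K * L * ∫ s in Set.Ioi t, exp (α * (t - s) + μ * s) * exp (-θ * s) * ‖ω s‖) :
    ∀ t : ℝ, 0 ≤ t → ω t = 0 := by
  set M := ⨆ t : {t : ℝ // 0 ≤ t}, exp (-b * t.1) * ‖ω t.1‖
  set q := K * L / (α + μ - θ + b) + K * L / (α - μ + θ - b)
  have hω : ∀ s, 0 ≤ s → ‖ω s‖ ≤ M * exp (b * s) := fun _ => norm_le_iSup_mul_exp hbdd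
  have hM : 0 ≤ M := by simpa using (norm_nonneg _).trans (hω 0 le_rfl)
  have hKL : 0 ≤ K * L := mul_nonneg (by linarith) hL.le
  have hbound : ∀ t, 0 ≤ t → ‖ω t‖ ≤ q * M * exp (b * t) := by
    intro t ht
    have h₁ := integral_kernel_mul_le (a := -α) (μ := μ) (θ := θ)
      (fun s => norm_nonneg (ω s)) hω (by linarith) ht
    have h₂ := setIntegral_Ioi_kernel_mul_le (a := α) (μ := μ) (θ := θ)
      (fun s => norm_nonneg (ω s)) hω h2 ht
    rw [neg_neg] at h₁
    calc ‖ω t‖ ≤ K * L * (M * exp ((μ - θ + b) * t) / (α + μ - θ + b))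
          + K * L * (M * exp ((μ - θ + b) * t) / (α - μ + θ - b)) :=
          (hineq t ht).trans (add_le_add (mul_le_mul_of_nonneg_left h₁ hKL)
            (mul_le_mul_of_nonneg_left h₂ hKL))
      _ = q * M * exp ((μ - θ + b) * t) := by ring
      _ ≤ q * M * exp (b * t) := by gcongr; nlinarith
  have hMq : M ≤ q * M := ciSup_le fun t => exp_neg_mul_mul_le_iff.2 (hbound t.1 t.2)
  have hM0 : M = 0 := by nlinarith
  intro t ht
  simpa [hM0] using hω t ht

/-- Uniqueness estimate used in the bijectivity step: a continuous function
bounded in the weighted norm satisfying the integral inequality with contraction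
constant `q < 1` must vanish identically. -/
theorem stmt_9 {E : Type*} [NormedAddCommGroup E] [NormedSpace ℝ E]
    (K L α μ θ b : ℝ)
    (hK : 1 ≤ K) (hL : 0 < L) (hα : 0 < α) (hμ : 0 ≤ μ) (hθμ : μ ≤ θ) (hb : 0 < b)
    (h1 : 0 < α + μ - θ + b) (h2 : 0 < α - μ + θ - b)
    (hq : K * L / (α + μ - θ + b) + K * L / (α - μ + θ - b) < 1)
    (ω : ℝ → E) (hcont : ContinuousOn ω (Set.Ici 0))
    (hbdd : BddAbove (Set.range fun t : {t : ℝ // 0 ≤ t} => exp (-b * t.1) * ‖ω t.1‖))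
    (hineq : ∀ t : ℝ, 0 ≤ t →
      ‖ω t‖ ≤ K * L * (∫ s in (0:ℝ)..t, exp (-α * (t - s) + μ * s) * exp (-θ * s) * ‖ω s‖)
        + K * L * ∫ s in Set.Ioi t, exp (α * (t - s) + μ * s) * exp (-θ * s) * ‖ω s‖) :
    ∀ t : ℝ, 0 ≤ t → ω t = 0 :=
  stmt_9_general K L α μ θ b hK hL hθμ h1 h2 hq ω hbdd hineq
end

section
/- Suppose y : {(s,t) : s,t ≥ 0} × ℝⁿ → ℝⁿ satisfies, for s ≤ t, the integral equation for its derivative in η: ∂y/∂η(s,t,η) = Φ(s,t) - ∫_s^t Φ(s,r) ∂₂f(r, y(r,t,η)) ∂y/∂η(r,t,η) dr, where ‖Φ(s,r)‖ ≤ K₀ e^{a|s-r|+εr} and ‖∂₂f(r,x)‖ ≤ L e^{-θr} with K₀ ≥ 1, a > 0, L > 0, 0 ≤ ε < θ. Then ‖∂y/∂η(s,t,η)‖ ≤ K₀ e^{a|s-t|+εt} e^{LK₀/(θ-ε)} for all s, t ≥ 0 and η ∈ ℝⁿ. -/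
/-!
Fix `t` and `η` and weight the derivative by `e^{-a|r-t|}`, i.e. put
`w r = e^{-a|r-t|} ‖∂y/∂η(r,t,η)‖`. For `r` between `s` and `t` one has `|s-r| + |r-t| = |s-t|`,
so multiplying the integral equation by `e^{-a|s-t|}` turns it into the linear integral inequality
`w s ≤ K₀ e^{εt} + ∫ L K₀ e^{-(θ-ε)r} w r dr`, the integral running over the interval between `t`
and `s`. Gronwall's lemma bounds `w s` by `K₀ e^{εt}` times the exponential of the integral of the
kernel, which is at most `∫₀^∞ L K₀ e^{-(θ-ε)r} dr = L K₀ / (θ-ε)`.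
-/

open Real MeasureTheory intervalIntegral Set
open scoped Interval

section Gronwall

variable {w k : ℝ → ℝ} {C s t : ℝ}

theorem le_mul_exp_integral_of_le_add_integral_right (hts : t ≤ s) (hw : Continuous w)
    (hk : Continuous k) (hk₀ : ∀ r ∈ Icc t s, 0 ≤ k r)
    (h : ∀ u ∈ Icc t s, w u ≤ C + ∫ r in t..u, k r * w r) :
    w s ≤ C * exp (∫ r in t..s, k r) := by
  set F : ℝ → ℝ := fun u => ∫ r in t..u, k r * w r
  set K : ℝ → ℝ := fun u => ∫ r in t..u, k r
  have hderiv : ∀ u, HasDerivAt (fun u => (C + F u) * exp (-K u))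
      (k u * (w u - (C + F u)) * exp (-K u)) u := by
    intro u
    have hF := ((hk.mul hw).integral_hasStrictDerivAt t u).hasDerivAt
    have hK := (hk.integral_hasStrictDerivAt t u).hasDerivAt
    exact ((hF.const_add C).mul hK.neg.exp).congr_deriv
      (by simp only [Pi.mul_apply, Pi.neg_apply]; ring)
  have hanti : AntitoneOn (fun u => (C + F u) * exp (-K u)) (Icc t s) := by
    refine antitoneOn_of_deriv_nonpos (convex_Icc t s)
      (fun u _ => (hderiv u).continuousAt.continuousWithinAt)
      (fun u _ => (hderiv u).differentiableAt.differentiableWithinAt) fun u hu => ?_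
    rw [(hderiv u).deriv]
    have hu' := interior_subset hu
    exact mul_nonpos_of_nonpos_of_nonneg
      (mul_nonpos_of_nonneg_of_nonpos (hk₀ u hu') (sub_nonpos.2 (h u hu'))) (exp_pos _).le
  have hs := hanti (left_mem_Icc.2 hts) (right_mem_Icc.2 hts) hts
  simp only [F, K, integral_same, add_zero, neg_zero, exp_zero, mul_one] at hs
  calc w s ≤ C + F s := h s (right_mem_Icc.2 hts)
    _ = (C + F s) * exp (-K s) * exp (K s) := by
      rw [mul_assoc, ← exp_add, neg_add_cancel, exp_zero, mul_one]
    _ ≤ C * exp (K s) := mul_le_mul_of_nonneg_right hs (exp_pos _).le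

theorem le_mul_exp_integral_of_le_add_integral_left (hst : s ≤ t) (hw : Continuous w)
    (hk : Continuous k) (hk₀ : ∀ r ∈ Icc s t, 0 ≤ k r)
    (h : ∀ u ∈ Icc s t, w u ≤ C + ∫ r in u..t, k r * w r) :
    w s ≤ C * exp (∫ r in s..t, k r) := by
  have := le_mul_exp_integral_of_le_add_integral_right (w := fun r => w (-r)) (k := fun r => k (-r))
    (neg_le_neg hst) (hw.comp continuous_neg) (hk.comp continuous_neg)
    (fun r hr => hk₀ (-r) ⟨le_neg.2 hr.2, neg_le.2 hr.1⟩) fun u hu => by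
      simpa [integral_comp_neg fun r => k r * w r] using
        h (-u) ⟨le_neg.2 hu.2, neg_le.2 hu.1⟩
  simpa [integral_comp_neg k] using this

theorem le_mul_exp_integral_uIoc_of_le_add_integral_uIoc (hw : Continuous w) (hk : Continuous k)
    (hk₀ : ∀ r ∈ uIcc t s, 0 ≤ k r)
    (h : ∀ u ∈ uIcc t s, w u ≤ C + ∫ r in Ι t u, k r * w r) :
    w s ≤ C * exp (∫ r in Ι t s, k r) := by
  rcases le_total t s with hts | hst
  · rw [uIcc_of_le hts] at hk₀ h
    rw [uIoc_of_le hts, ← integral_of_le hts]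
    refine le_mul_exp_integral_of_le_add_integral_right hts hw hk hk₀ fun u hu => ?_
    simpa [uIoc_of_le hu.1, ← integral_of_le hu.1] using h u hu
  · rw [uIcc_of_ge hst] at hk₀ h
    rw [uIoc_of_ge hst, ← integral_of_le hst]
    refine le_mul_exp_integral_of_le_add_integral_left hst hw hk hk₀ fun u hu => ?_
    simpa [uIoc_of_ge hu.2, ← integral_of_le hu.2] using h u hu

end Gronwall

theorem setIntegral_uIoc_exp_neg_mul_le {p q c : ℝ} (hp : 0 ≤ p) (hq : 0 ≤ q) (hc : 0 < c) :
    ∫ r in Ι p q, exp (-c * r) ≤ 1 / c := by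
  have hsub : Ι p q ⊆ Ioi 0 := fun r hr => (le_min hp hq).trans_lt hr.1
  calc ∫ r in Ι p q, exp (-c * r) ≤ ∫ r in Ioi 0, exp (-c * r) :=
        setIntegral_mono_set (integrableOn_exp_mul_Ioi (neg_lt_zero.2 hc) 0)
          (ae_restrict_of_forall_mem measurableSet_Ioi fun _ _ => (exp_pos _).le)
          hsub.eventuallyLE
    _ = 1 / c := by
      rw [integral_exp_mul_Ioi (neg_lt_zero.2 hc)]
      field_simp
      simp

theorem abs_sub_add_abs_sub_of_mem_uIcc {u r t : ℝ} (hr : r ∈ uIcc u t) :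
    |u - r| + |r - t| = |u - t| := by
  rcases mem_uIcc.1 hr with ⟨hur, hrt⟩ | ⟨htr, hru⟩
  · rw [abs_of_nonpos (sub_nonpos.2 hur), abs_of_nonpos (sub_nonpos.2 hrt),
      abs_of_nonpos (sub_nonpos.2 (hur.trans hrt))]
    ring
  · rw [abs_of_nonneg (sub_nonneg.2 hru), abs_of_nonneg (sub_nonneg.2 htr),
      abs_of_nonneg (sub_nonneg.2 (htr.trans hru))]
    ring

section IntegralEquation

variable {E : Type*} [NormedAddCommGroup E] [NormedSpace ℝ E]
  {K₀ a L ε θ t : ℝ} {Φ : ℝ → ℝ → E →L[ℝ] E} {g z : ℝ → E →L[ℝ] E}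

theorem norm_comp_comp_le_of_mem_uIcc
    (hΦ : ∀ s r : ℝ, 0 ≤ s → 0 ≤ r → ‖Φ s r‖ ≤ K₀ * exp (a * |s - r| + ε * r))
    (hg : ∀ r : ℝ, 0 ≤ r → ‖g r‖ ≤ L * exp (-θ * r)) (hK₀ : 0 ≤ K₀)
    {u r : ℝ} (hu : 0 ≤ u) (hr₀ : 0 ≤ r) (hr : r ∈ uIcc u t) :
    ‖(Φ u r).comp ((g r).comp (z r))‖ ≤
      exp (a * |u - t|) * (L * K₀ * exp (-(θ - ε) * r) * (exp (-(a * |r - t|)) * ‖z r‖)) := by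
  have hexp : exp (a * |u - r| + ε * r) * exp (-θ * r) =
      exp (a * |u - t|) * exp (-(θ - ε) * r) * exp (-(a * |r - t|)) := by
    simp only [← exp_add, ← abs_sub_add_abs_sub_of_mem_uIcc hr]
    ring_nf
  calc ‖(Φ u r).comp ((g r).comp (z r))‖ ≤ ‖Φ u r‖ * (‖g r‖ * ‖z r‖) :=
        (ContinuousLinearMap.opNorm_comp_le _ _).trans
          (mul_le_mul_of_nonneg_left (ContinuousLinearMap.opNorm_comp_le _ _) (norm_nonneg _))
    _ ≤ K₀ * exp (a * |u - r| + ε * r) * (L * exp (-θ * r) * ‖z r‖) :=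
        mul_le_mul (hΦ u r hu hr₀) (mul_le_mul_of_nonneg_right (hg r hr₀) (norm_nonneg _))
          (by positivity) (mul_nonneg hK₀ (exp_pos _).le)
    _ = _ := by linear_combination (L * K₀ * ‖z r‖) * hexp

theorem exp_neg_mul_abs_sub_mul_norm_le
    (hΦ : ∀ s r : ℝ, 0 ≤ s → 0 ≤ r → ‖Φ s r‖ ≤ K₀ * exp (a * |s - r| + ε * r))
    (hg : ∀ r : ℝ, 0 ≤ r → ‖g r‖ ≤ L * exp (-θ * r)) (hK₀ : 0 ≤ K₀) (ht : 0 ≤ t)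
    (hz : Continuous z) {u : ℝ} (hu : 0 ≤ u)
    (heq : z u = Φ u t - ∫ r in u..t, (Φ u r).comp ((g r).comp (z r))) :
    exp (-(a * |u - t|)) * ‖z u‖ ≤ K₀ * exp (ε * t) +
      ∫ r in Ι t u, L * K₀ * exp (-(θ - ε) * r) * (exp (-(a * |r - t|)) * ‖z r‖) := by
  set I := ∫ r in Ι t u, L * K₀ * exp (-(θ - ε) * r) * (exp (-(a * |r - t|)) * ‖z r‖)
  have hI : ‖∫ r in u..t, (Φ u r).comp ((g r).comp (z r))‖ ≤ exp (a * |u - t|) * I := by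
    rw [norm_integral_eq_norm_integral_uIoc, uIoc_comm, ← MeasureTheory.integral_const_mul]
    refine norm_integral_le_of_norm_le ((Continuous.intervalIntegrable (by fun_prop) t u).def')
      (ae_restrict_of_forall_mem measurableSet_uIoc fun r hr => ?_)
    have hr' : r ∈ uIcc u t := uIcc_comm t u ▸ uIoc_subset_uIcc hr
    exact norm_comp_comp_le_of_mem_uIcc hΦ hg hK₀ hu ((le_min ht hu).trans hr.1.le) hr'
  rw [exp_neg, inv_mul_le_iff₀ (exp_pos _)]
  calc ‖z u‖ ≤ ‖Φ u t‖ + ‖∫ r in u..t, (Φ u r).comp ((g r).comp (z r))‖ := by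
        rw [heq]; exact norm_sub_le _ _
    _ ≤ K₀ * exp (a * |u - t| + ε * t) + exp (a * |u - t|) * I := add_le_add (hΦ u t hu ht) hI
    _ = exp (a * |u - t|) * (K₀ * exp (ε * t) + I) := by rw [exp_add]; ring

end IntegralEquation

theorem stmt_11_general {E : Type*} [NormedAddCommGroup E] [NormedSpace ℝ E]
    (K₀ a L ε θ : ℝ) (hK₀ : 1 ≤ K₀) (hL : 0 < L)
    (hεθ : ε < θ)
    (Φ : ℝ → ℝ → E →L[ℝ] E) (y : ℝ → ℝ → E → E)
    (D₂f : ℝ → E → E →L[ℝ] E) (Dy : ℝ → ℝ → E → E →L[ℝ] E)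
    (hΦ : ∀ s r : ℝ, 0 ≤ s → 0 ≤ r → ‖Φ s r‖ ≤ K₀ * exp (a * |s - r| + ε * r))
    (hD₂f : ∀ r : ℝ, 0 ≤ r → ∀ x : E, ‖D₂f r x‖ ≤ L * exp (-θ * r))
    (hDycont : ∀ t : ℝ, ∀ η : E, Continuous fun s => Dy s t η)
    (heq : ∀ s t : ℝ, 0 ≤ s → 0 ≤ t → ∀ η : E,
      Dy s t η = Φ s t
        - ∫ r in s..t, (Φ s r).comp ((D₂f r (y r t η)).comp (Dy r t η))) :
    ∀ s t : ℝ, 0 ≤ s → 0 ≤ t → ∀ η : E,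
      ‖Dy s t η‖ ≤ K₀ * exp (a * |s - t| + ε * t) * exp (L * K₀ / (θ - ε)) := by
  intro s t hs ht η
  have hK₀' : 0 ≤ K₀ := zero_le_one.trans hK₀
  have hkernel : ∀ r, 0 ≤ L * K₀ * exp (-(θ - ε) * r) := fun r =>
    mul_nonneg (mul_nonneg hL.le hK₀') (exp_pos _).le
  have hgron : exp (-(a * |s - t|)) * ‖Dy s t η‖ ≤
      K₀ * exp (ε * t) * exp (∫ r in Ι t s, L * K₀ * exp (-(θ - ε) * r)) := by
    have hDy := hDycont t η
    refine le_mul_exp_integral_uIoc_of_le_add_integral_uIoc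
      (w := fun r => exp (-(a * |r - t|)) * ‖Dy r t η‖) (by fun_prop) (by fun_prop)
      (fun r _ => hkernel r) fun u hu => ?_
    have hu₀ : 0 ≤ u := (le_min ht hs).trans hu.1
    exact exp_neg_mul_abs_sub_mul_norm_le hΦ (fun r hr => hD₂f r hr _) hK₀' ht hDy hu₀
      (heq u t hu₀ ht η)
  have hdecay : ∫ r in Ι t s, L * K₀ * exp (-(θ - ε) * r) ≤ L * K₀ / (θ - ε) := by
    rw [MeasureTheory.integral_const_mul, div_eq_mul_one_div]
    exact mul_le_mul_of_nonneg_left (setIntegral_uIoc_exp_neg_mul_le ht hs (sub_pos.2 hεθ))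
      (mul_nonneg hL.le hK₀')
  calc ‖Dy s t η‖ = exp (a * |s - t|) * (exp (-(a * |s - t|)) * ‖Dy s t η‖) := by
        rw [← mul_assoc, ← exp_add, add_neg_cancel, exp_zero, one_mul]
    _ ≤ exp (a * |s - t|) * (K₀ * exp (ε * t) * exp (L * K₀ / (θ - ε))) :=
        mul_le_mul_of_nonneg_left (hgron.trans (by gcongr)) (exp_pos _).le
    _ = K₀ * exp (a * |s - t| + ε * t) * exp (L * K₀ / (θ - ε)) := by rw [exp_add]; ring

/-- Bound on the derivative of the solution of the perturbed system with respect to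
the initial condition, under nonuniform bounded growth. -/
theorem stmt_11 {E : Type*} [NormedAddCommGroup E] [NormedSpace ℝ E] [CompleteSpace E]
    (K₀ a L ε θ : ℝ) (hK₀ : 1 ≤ K₀) (ha : 0 < a) (hL : 0 < L)
    (hε : 0 ≤ ε) (hεθ : ε < θ)
    (Φ : ℝ → ℝ → E →L[ℝ] E) (y : ℝ → ℝ → E → E)
    (D₂f : ℝ → E → E →L[ℝ] E) (Dy : ℝ → ℝ → E → E →L[ℝ] E)
    (hΦ : ∀ s r : ℝ, 0 ≤ s → 0 ≤ r → ‖Φ s r‖ ≤ K₀ * exp (a * |s - r| + ε * r))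
    (hD₂f : ∀ r : ℝ, 0 ≤ r → ∀ x : E, ‖D₂f r x‖ ≤ L * exp (-θ * r))
    (hDycont : ∀ t : ℝ, ∀ η : E, Continuous fun s => Dy s t η)
    (heq : ∀ s t : ℝ, 0 ≤ s → 0 ≤ t → ∀ η : E,
      Dy s t η = Φ s t
        - ∫ r in s..t, (Φ s r).comp ((D₂f r (y r t η)).comp (Dy r t η))) :
    ∀ s t : ℝ, 0 ≤ s → 0 ≤ t → ∀ η : E,
      ‖Dy s t η‖ ≤ K₀ * exp (a * |s - t| + ε * t) * exp (L * K₀ / (θ - ε)) :=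
  stmt_11_general K₀ a L ε θ hK₀ hL hεθ Φ y D₂f Dy hΦ hD₂f hDycont heq
end
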